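/- arXiv:2410.10033 — 2 statements merged into one kernel-verified Lean document; each statement's English description precedes it below -/
import Mathlib

section
/- Let n ≥ 1 be an integer and let ω = exp(2πi/n) ∈ ℂ. For every integer u with 0 ≤ u ≤ n−1 one has Σ_{j=1}^{n−1} ω^{ju}/(1 − ω^{−j})² = −(n−1)(n−5)/12 + u(n−u−2)/2 (an equality of complex numbers, where the right-hand side is a rational number viewed in ℂ). -/
/-!
Put `α(v) = ∑ⱼ ζ^{jv}/(1 - ζ^j)` and `β(u) = ∑ⱼ ζ^{ju}/(1 - ζ^{-j})²`, the sums running over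
`1 ≤ j ≤ n - 1`. For `x = ζ^j ≠ 1` one has `x^{v+1}/(1 - x) = x^v/(1 - x) - x^v` and
`x^{u+1}/(1 - x⁻¹)² = x^u/(1 - x⁻¹)² - x^{u+2}/(1 - x)`, so by orthogonality of characters
`α(v+1) = α(v) + 1` for `0 < v < n` and `β(u+1) = β(u) - α(u+2)`. Thus `α` and `β` are polynomial
in their index up to the unknown constants `α(1)` and `β(0)`, which are pinned down by the vanishing
of `∑_{u<n} α(u+1)` and `∑_{u<n} β(u)` (again because `∑_{u<n} x^u = 0`).
-/

open Finset

lemma sum_range_eq_add_sum_Icc {M : Type*} [AddCommMonoid M] (f : ℕ → M) {n : ℕ} (hn : 0 < n) :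
    ∑ i ∈ range n, f i = f 0 + ∑ i ∈ Icc 1 (n - 1), f i := by
  rw [sum_range_eq_add_Ico f hn, Icc_sub_one_right_eq_Ico_of_not_isMin (by simpa using hn.ne')]

lemma two_mul_sum_range_natCast {R : Type*} [CommRing R] (m : ℕ) :
    2 * ∑ v ∈ range m, (v : R) = m * (m - 1) := by
  induction m with
  | zero => simp
  | succ m ih => rw [sum_range_succ, mul_add, ih]; push_cast; ring

lemma six_mul_sum_range_natCast_mul {R : Type*} [CommRing R] (c : R) (m : ℕ) :
    6 * ∑ u ∈ range m, (u : R) * (c - u - 2) = m * (m - 1) * (3 * c - 2 * m - 5) := by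
  induction m with
  | zero => simp
  | succ m ih => rw [sum_range_succ, mul_add, ih]; push_cast; ring

section Field

variable {K : Type*} [Field K]

lemma pow_succ_div_one_sub {x : K} (hx : x ≠ 1) (v : ℕ) :
    x ^ (v + 1) / (1 - x) = x ^ v / (1 - x) - x ^ v := by
  have : 1 - x ≠ 0 := sub_ne_zero.2 hx.symm
  field_simp
  ring

lemma pow_succ_div_one_sub_inv_sq {x : K} (hx₀ : x ≠ 0) (hx₁ : x ≠ 1) (u : ℕ) :
    x ^ (u + 1) / (1 - x⁻¹) ^ 2 = x ^ u / (1 - x⁻¹) ^ 2 - x ^ (u + 2) / (1 - x) := by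
  have : 1 - x ≠ 0 := sub_ne_zero.2 hx₁.symm
  rw [show 1 - x⁻¹ = -(1 - x) / x by field_simp; ring]
  field_simp
  ring

def alphaSum (ζ : K) (n v : ℕ) : K :=
  ∑ j ∈ Icc 1 (n - 1), ζ ^ (j * v) / (1 - ζ ^ j)

def betaSum (ζ : K) (n u : ℕ) : K :=
  ∑ j ∈ Icc 1 (n - 1), ζ ^ (j * u) / (1 - ζ ^ (-(j : ℤ))) ^ 2

namespace IsPrimitiveRoot

variable {ζ : K} {n : ℕ} (hζ : IsPrimitiveRoot ζ n)
include hζ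

lemma pow_ne_one_of_mem_Icc {j : ℕ} (hj : j ∈ Icc 1 (n - 1)) : ζ ^ j ≠ 1 := by
  rw [mem_Icc] at hj
  exact hζ.pow_ne_one_of_pos_of_lt (by omega) (by omega)

lemma sum_range_pow_mul_eq_zero {j : ℕ} (hj : ¬n ∣ j) : ∑ u ∈ range n, ζ ^ (j * u) = 0 := by
  have : ζ ^ j ≠ 1 := mt (hζ.pow_eq_one_iff_dvd j).1 hj
  simp_rw [pow_mul]
  rw [geom_sum_eq this, ← pow_mul, mul_comm, pow_mul, hζ.pow_eq_one, one_pow, sub_self, zero_div]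

lemma sum_Icc_pow_mul_eq_neg_one (hn : 0 < n) {v : ℕ} (hv : ¬n ∣ v) :
    ∑ j ∈ Icc 1 (n - 1), ζ ^ (j * v) = -1 := by
  have h := hζ.sum_range_pow_mul_eq_zero hv
  simp only [sum_range_eq_add_sum_Icc _ hn, mul_comm v] at h
  linear_combination h

lemma sum_range_sum_Icc_pow_mul_mul (f : ℕ → K) :
    ∑ u ∈ range n, ∑ j ∈ Icc 1 (n - 1), ζ ^ (j * u) * f j = 0 := by
  rw [sum_comm]
  refine sum_eq_zero fun j hj => ?_
  rw [mem_Icc] at hj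
  rw [← sum_mul, hζ.sum_range_pow_mul_eq_zero (Nat.not_dvd_of_pos_of_lt (by omega) (by omega)),
    zero_mul]

lemma alphaSum_succ (v : ℕ) :
    alphaSum ζ n (v + 1) = alphaSum ζ n v - ∑ j ∈ Icc 1 (n - 1), ζ ^ (j * v) := by
  rw [alphaSum, alphaSum, ← sum_sub_distrib]
  refine sum_congr rfl fun j hj => ?_
  rw [pow_mul, pow_mul, pow_succ_div_one_sub (hζ.pow_ne_one_of_mem_Icc hj)]

lemma alphaSum_add_one (hn : 0 < n) {v : ℕ} (hv : v < n) :
    alphaSum ζ n (v + 1) = alphaSum ζ n 1 + v := by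
  induction v with
  | zero => simp
  | succ v ih =>
    rw [hζ.alphaSum_succ, ih (by omega),
      hζ.sum_Icc_pow_mul_eq_neg_one hn (Nat.not_dvd_of_pos_of_lt (by omega) hv)]
    push_cast
    ring

lemma sum_range_alphaSum_succ : ∑ v ∈ range n, alphaSum ζ n (v + 1) = 0 := by
  simpa only [alphaSum, mul_add, mul_one, pow_add, mul_div_assoc] using
    hζ.sum_range_sum_Icc_pow_mul_mul fun j => ζ ^ j / (1 - ζ ^ j)

lemma alphaSum_one [CharZero K] (hn : 0 < n) : alphaSum ζ n 1 = -((n : K) - 1) / 2 := by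
  have h := hζ.sum_range_alphaSum_succ
  rw [sum_congr rfl fun v hv => hζ.alphaSum_add_one hn (mem_range.1 hv), sum_add_distrib,
    sum_const, card_range, nsmul_eq_mul] at h
  have hn' : (n : K) ≠ 0 := by exact_mod_cast hn.ne'
  apply mul_left_cancel₀ hn'
  linear_combination h - two_mul_sum_range_natCast (R := K) n / 2

lemma alphaSum_eq [CharZero K] (hn : 0 < n) {v : ℕ} (hv₁ : 1 ≤ v) (hv : v ≤ n) :
    alphaSum ζ n v = v - ((n : K) + 1) / 2 := by
  obtain ⟨w, rfl⟩ : ∃ w, v = w + 1 := ⟨v - 1, by omega⟩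
  rw [hζ.alphaSum_add_one hn (by omega), hζ.alphaSum_one hn]
  push_cast
  ring

lemma betaSum_succ (hn : 0 < n) (u : ℕ) :
    betaSum ζ n (u + 1) = betaSum ζ n u - alphaSum ζ n (u + 2) := by
  rw [betaSum, betaSum, alphaSum, ← sum_sub_distrib]
  refine sum_congr rfl fun j hj => ?_
  simp only [zpow_neg, zpow_natCast, pow_mul]
  exact pow_succ_div_one_sub_inv_sq (pow_ne_zero _ (hζ.ne_zero hn.ne'))
    (hζ.pow_ne_one_of_mem_Icc hj) u

lemma betaSum_eq_betaSum_zero_add [CharZero K] (hn : 0 < n) {u : ℕ} (hu : u < n) :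
    betaSum ζ n u = betaSum ζ n 0 + u * ((n : K) - u - 2) / 2 := by
  induction u with
  | zero => simp
  | succ u ih =>
    rw [hζ.betaSum_succ hn, ih (by omega), hζ.alphaSum_eq hn (by omega) (by omega)]
    push_cast
    ring

lemma sum_range_betaSum : ∑ u ∈ range n, betaSum ζ n u = 0 := by
  simp only [betaSum, div_eq_mul_inv]
  exact hζ.sum_range_sum_Icc_pow_mul_mul _

lemma betaSum_zero [CharZero K] (hn : 0 < n) :
    betaSum ζ n 0 = -(((n : K) - 1) * ((n : K) - 5)) / 12 := by
  have h := hζ.sum_range_betaSum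
  rw [sum_congr rfl fun u hu => hζ.betaSum_eq_betaSum_zero_add hn (mem_range.1 hu),
    sum_add_distrib, sum_const, card_range, nsmul_eq_mul, ← sum_div] at h
  have hn' : (n : K) ≠ 0 := by exact_mod_cast hn.ne'
  apply mul_left_cancel₀ hn'
  linear_combination h - six_mul_sum_range_natCast_mul (n : K) n / 12

lemma betaSum_eq [CharZero K] (hn : 0 < n) {u : ℕ} (hu : u < n) :
    betaSum ζ n u = -(((n : K) - 1) * ((n : K) - 5)) / 12 + u * ((n : K) - u - 2) / 2 := by
  rw [hζ.betaSum_eq_betaSum_zero_add hn hu, hζ.betaSum_zero hn]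

end IsPrimitiveRoot

end Field

/-- For `n ≥ 1`, `ω = exp(2πi/n)` and `0 ≤ u ≤ n-1`:
`∑_{j=1}^{n-1} ω^{ju}/(1 - ω^{-j})² = -(n-1)(n-5)/12 + u(n-u-2)/2`. -/
theorem beta_sum_eval (n : ℕ) (hn : 1 ≤ n) (ω : ℂ)
    (hω : ω = Complex.exp (2 * Real.pi * Complex.I / n))
    (u : ℕ) (hu : u ≤ n - 1) :
    ∑ j ∈ Finset.Icc 1 (n - 1), ω ^ (j * u) / (1 - ω ^ (-(j : ℤ))) ^ 2 =
      -(((n : ℂ) - 1) * ((n : ℂ) - 5)) / 12 + (u : ℂ) * ((n : ℂ) - (u : ℂ) - 2) / 2 := by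
  subst hω
  exact (Complex.isPrimitiveRoot_exp n (by omega)).betaSum_eq (by omega) (by omega)
end

section
/- Let n ≥ 1 be an integer and let ζ = exp(πi/n) ∈ ℂ. Then Σ_{j=1}^{2n−1} ζ^{(n−1)j}/(1−ζ^{−j})² = (2n²+1)/12 (an equality of complex numbers, the right-hand side being a rational number viewed in ℂ). -/
/-!
Writing `c a = a (m - a)`, every `m`-th root of unity `w ≠ 1` satisfies
`(1 - w)² ∑_{a<m} c a w^a = 2 m w`, so `w^(k+1) / (1 - w)²` is a polynomial in `w` of degree
less than `m + k`. Summing over the nontrivial `m`-th roots `w = ζ^j`, orthogonality of characters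
picks out the coefficient with `m ∣ a + k`, i.e. `a = m - k`, and subtracts the missing term
`j = 0`, which is `∑ c a = (m³ - m)/6`. For `ζ = exp(πi/n)` the sum is the case `m = 2n`, `k = n`
for the primitive root `ζ⁻¹`.
-/

open Finset

section PowerSums

variable {R : Type*} [CommRing R]

theorem one_sub_sq_mul_sum_range_mul_pow (x : R) (m : ℕ) :
    (1 - x) ^ 2 * ∑ a ∈ range m, (a : R) * x ^ a = x - m * x ^ m + (m - 1) * x ^ (m + 1) := by
  induction m with
  | zero => simp
  | succ m ih => rw [sum_range_succ, mul_add, ih]; push_cast; ring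

theorem one_sub_pow_three_mul_sum_range_sq_mul_pow (x : R) (m : ℕ) :
    (1 - x) ^ 3 * ∑ a ∈ range m, (a : R) ^ 2 * x ^ a =
      x + x ^ 2 - m ^ 2 * x ^ m + (2 * m ^ 2 - 2 * m - 1) * x ^ (m + 1)
        - (m - 1) ^ 2 * x ^ (m + 2) := by
  induction m with
  | zero => simp
  | succ m ih => rw [sum_range_succ, mul_add, ih]; push_cast; ring

theorem six_mul_sum_range_mul_sub (m : ℕ) :
    6 * ∑ a ∈ range m, (a : R) * (m - a) = m ^ 3 - m := by
  suffices ∀ c : R,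
      6 * ∑ a ∈ range m, (a : R) * (c - a) = 3 * c * m * (m - 1) - (m - 1) * m * (2 * m - 1) by
    rw [this]; ring
  intro c
  induction m with
  | zero => simp
  | succ m ih => rw [sum_range_succ, mul_add, ih]; push_cast; ring

theorem sum_range_ite_dvd_add_mul_sub {k m : ℕ} (hk : k ≤ m) :
    ∑ a ∈ range m, (if m ∣ a + k then (a : R) * (m - a) else 0) = k * (m - k) := by
  have hzero : ∀ a ≤ m, m ∣ a + k → a ≠ m - k → (a : R) * (m - a) = 0 := by
    rintro a ha ⟨q, hq⟩ hne
    have : a = 0 ∨ a = m := by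
      rcases q with _ | _ | q
      · omega
      · omega
      · ring_nf at hq; omega
    rcases this with rfl | rfl <;> simp
  calc ∑ a ∈ range m, (if m ∣ a + k then (a : R) * (m - a) else 0)
      = ∑ a ∈ range (m + 1), (if m ∣ a + k then (a : R) * (m - a) else 0) := by
        simp [sum_range_succ]
    _ = (if m ∣ (m - k) + k then ((m - k : ℕ) : R) * (m - (m - k : ℕ)) else 0) := by
        refine sum_eq_single_of_mem _ (by simp) fun a ha hne => ?_
        split_ifs with hdvd
        · exact hzero a (by simpa [Nat.lt_succ_iff] using ha) hdvd hne
        · rfl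
    _ = k * (m - k) := by
        rw [Nat.sub_add_cancel hk, if_pos dvd_rfl, Nat.cast_sub hk]; ring

end PowerSums

section RootsOfUnity

variable {K : Type*} [Field K]

theorem one_sub_sq_mul_sum_range_mul_sub_mul_pow {w : K} {m : ℕ} (hw : w ^ m = 1) (hw1 : w ≠ 1) :
    (1 - w) ^ 2 * ∑ a ∈ range m, (a : K) * (m - a) * w ^ a = 2 * m * w := by
  have hsplit : ∑ a ∈ range m, (a : K) * (m - a) * w ^ a
      = m * ∑ a ∈ range m, (a : K) * w ^ a - ∑ a ∈ range m, (a : K) ^ 2 * w ^ a := by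
    rw [mul_sum, ← sum_sub_distrib]
    exact sum_congr rfl fun a _ => by ring
  refine mul_left_cancel₀ (sub_ne_zero.2 hw1.symm) ?_
  have hA := one_sub_sq_mul_sum_range_mul_pow w m
  have hB := one_sub_pow_three_mul_sum_range_sq_mul_pow w m
  rw [hsplit]
  linear_combination (m : K) * (1 - w) * hA - hB
    + (m * (1 - w) * ((m - 1) * w - m) + m ^ 2 - (2 * m ^ 2 - 2 * m - 1) * w + (m - 1) ^ 2 * w ^ 2)
      * hw

theorem pow_succ_div_one_sub_sq_eq_sum [CharZero K] {w : K} {m : ℕ} (k : ℕ) (hw : w ^ m = 1)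
    (hw1 : w ≠ 1) (hm : m ≠ 0) :
    w ^ (k + 1) / (1 - w) ^ 2 = ∑ a ∈ range m, (a : K) * (m - a) / (2 * m) * w ^ (a + k) := by
  have hm' : (m : K) ≠ 0 := Nat.cast_ne_zero.2 hm
  have hsum : ∑ a ∈ range m, (a : K) * (m - a) / (2 * m) * w ^ (a + k)
      = w ^ k / (2 * m) * ∑ a ∈ range m, (a : K) * (m - a) * w ^ a := by
    rw [mul_sum]
    exact sum_congr rfl fun a _ => by rw [pow_add]; ring
  rw [div_eq_iff (pow_ne_zero 2 (sub_ne_zero.2 hw1.symm)), hsum, mul_assoc,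
    mul_comm _ ((1 - w) ^ 2), one_sub_sq_mul_sum_range_mul_sub_mul_pow hw hw1]
  field_simp
  ring

theorem IsPrimitiveRoot.sum_range_pow_pow {ζ : K} {m : ℕ} (hζ : IsPrimitiveRoot ζ m) (l : ℕ) :
    ∑ j ∈ range m, (ζ ^ l) ^ j = if m ∣ l then (m : K) else 0 := by
  split_ifs with hl
  · simp [(hζ.pow_eq_one_iff_dvd l).2 hl]
  · have hne : ζ ^ l ≠ 1 := mt (hζ.pow_eq_one_iff_dvd l).1 hl
    rw [geom_sum_eq hne, pow_right_comm, hζ.pow_eq_one, one_pow, sub_self, zero_div]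

theorem IsPrimitiveRoot.sum_Icc_pow_pow {ζ : K} {m : ℕ} (hζ : IsPrimitiveRoot ζ m) (hm : m ≠ 0)
    (l : ℕ) : ∑ j ∈ Icc 1 (m - 1), (ζ ^ l) ^ j = (if m ∣ l then (m : K) else 0) - 1 := by
  have : Icc 1 (m - 1) = (range m).erase 0 := by ext; simp; omega
  rw [this, sum_erase_eq_sub (by simpa [Nat.pos_iff_ne_zero]), hζ.sum_range_pow_pow, pow_zero]

theorem IsPrimitiveRoot.sum_Icc_pow_mul_div_one_sub_pow_sq [CharZero K] {ζ : K} {m k : ℕ}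
    (hζ : IsPrimitiveRoot ζ m) (hm : m ≠ 0) (hk : k ≤ m) :
    ∑ j ∈ Icc 1 (m - 1), ζ ^ ((k + 1) * j) / (1 - ζ ^ j) ^ 2 =
      (6 * (k : K) * (m - k) - m ^ 2 + 1) / 12 := by
  have hm' : (m : K) ≠ 0 := Nat.cast_ne_zero.2 hm
  have hterm : ∀ j ∈ Icc 1 (m - 1), ζ ^ ((k + 1) * j) / (1 - ζ ^ j) ^ 2 =
      ∑ a ∈ range m, (a : K) * (m - a) / (2 * m) * (ζ ^ (a + k)) ^ j := by
    intro j hj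
    rw [mem_Icc] at hj
    have hj1 : ζ ^ j ≠ 1 := by
      rw [Ne, hζ.pow_eq_one_iff_dvd]
      exact Nat.not_dvd_of_pos_of_lt (by omega) (by omega)
    have hjm : (ζ ^ j) ^ m = 1 := by rw [pow_right_comm, hζ.pow_eq_one, one_pow]
    simp_rw [mul_comm (k + 1) j, pow_mul, pow_succ_div_one_sub_sq_eq_sum k hjm hj1 hm,
      pow_right_comm ζ j]
  have hcoef : ∀ a ∈ range m,
      (a : K) * (m - a) / (2 * m) * ((if m ∣ a + k then (m : K) else 0) - 1)
        = (if m ∣ a + k then (a : K) * (m - a) else 0) / 2 - (a : K) * (m - a) / (2 * m) := by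
    intro a _
    split_ifs
    · field_simp
    · ring
  rw [sum_congr rfl hterm, sum_comm]
  simp_rw [← mul_sum, hζ.sum_Icc_pow_pow hm]
  rw [sum_congr rfl hcoef, sum_sub_distrib, ← sum_div, ← sum_div, sum_range_ite_dvd_add_mul_sub hk]
  have htotal := six_mul_sum_range_mul_sub (R := K) m
  field_simp
  linear_combination -2 * htotal

end RootsOfUnity

/-- For `n ≥ 1` and `ζ = exp(πi/n)`:
`∑_{j=1}^{2n-1} ζ^{(n-1)j}/(1-ζ^{-j})² = (2n²+1)/12`. -/
theorem beta_sum_prism_v1 (n : ℕ) (hn : 1 ≤ n) (ζ : ℂ)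
    (hζ : ζ = Complex.exp (Real.pi * Complex.I / n)) :
    ∑ j ∈ Finset.Icc 1 (2 * n - 1), ζ ^ ((n - 1) * j) / (1 - ζ ^ (-(j : ℤ))) ^ 2 =
      (2 * (n : ℂ) ^ 2 + 1) / 12 := by
  have hprim : IsPrimitiveRoot ζ (2 * n) := by
    convert Complex.isPrimitiveRoot_exp (2 * n) (by omega) using 2
    rw [hζ]
    push_cast
    field_simp
  have hnum : ∀ j : ℕ, ζ ^ ((n - 1) * j) = ζ⁻¹ ^ ((n + 1) * j) := fun j => by
    rw [inv_pow]
    refine eq_inv_of_mul_eq_one_left ?_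
    rw [← pow_add, ← add_mul, show n - 1 + (n + 1) = 2 * n by omega, pow_mul, hprim.pow_eq_one,
      one_pow]
  have hden : ∀ j : ℕ, ζ ^ (-(j : ℤ)) = ζ⁻¹ ^ j := fun j => by rw [zpow_neg, zpow_natCast, inv_pow]
  simp_rw [hnum, hden]
  rw [hprim.inv.sum_Icc_pow_mul_div_one_sub_pow_sq (by omega) (by omega)]
  push_cast
  ring
end
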